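/- arXiv:math/0109018 — 10 statements merged into one kernel-verified Lean document; each statement's English description precedes it below -/
import Mathlib

section
/- Let M_i (i=1,…,6) be the 2×2 matrices M_i = [[1, -1],[1, -T_i]] with T_i ∈ ℂ. If the product M_6 M_5 M_4 M_3 M_2 M_1 is a scalar multiple of the identity matrix, then T_1/T_4 = T_3/T_6 = T_5/T_2 = (T_1 + T_3 - 1 - T_1 T_2 T_3)/(1 - T_2), provided all denominators are nonzero. -/
/-!
Write the product as `B * A` with `A = M₃ M₂ M₁` and `B = M₆ M₅ M₄`, both of the explicit shape
`!![b - 1, a (1 - b); c (b - 1), X]` with `X = a + c - 1 - abc`. If `B * A = ρ • 1` then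
`det A • B = ρ • adj A`, and comparing entries gives `T₄ X = T₁ (1 - T₂)` and `T₆ X = T₃ (1 - T₂)`.
A scalar product stays scalar under cyclic rotation of its factors, so the same argument applied to
`M₁ M₆ M₅ M₄ M₃ M₂` yields `T₅ / T₂ = T₁ / T₄`.
-/

namespace Matrix

variable {n R : Type*} [Fintype n] [DecidableEq n]

theorem det_smul_eq_smul_adjugate_of_mul_eq_smul_one [CommRing R] {A B : Matrix n n R} {ρ : R}
    (h : B * A = ρ • 1) : A.det • B = ρ • A.adjugate := by
  calc A.det • B = B * (A * A.adjugate) := by rw [mul_adjugate, mul_smul_comm, mul_one]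
    _ = ρ • A.adjugate := by rw [← Matrix.mul_assoc, h, smul_mul_assoc, Matrix.one_mul]

theorem mul_eq_smul_one_comm [Field R] {A B : Matrix n n R} {ρ : R} (hρ : ρ ≠ 0)
    (h : A * B = ρ • 1) : B * A = ρ • 1 := by
  have hinv : A * (ρ⁻¹ • B) = 1 := by
    rw [mul_smul_comm, h, smul_smul, inv_mul_cancel₀ hρ, one_smul]
  have hinv' := mul_eq_one_comm.mp hinv
  rw [smul_mul_assoc] at hinv'
  rw [← hinv', smul_smul, mul_inv_cancel₀ hρ, one_smul]

end Matrix

section TransferMatrix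

variable {K : Type*} [Field K]

def transferMatrix (t : K) : Matrix (Fin 2) (Fin 2) K := !![1, -1; 1, -t]

theorem det_transferMatrix (t : K) : (transferMatrix t).det = 1 - t := by
  rw [transferMatrix, Matrix.det_fin_two_of]
  ring

theorem transferMatrix_mul_mul (a b c : K) :
    transferMatrix c * transferMatrix b * transferMatrix a =
      !![b - 1, a * (1 - b); c * (b - 1), a + c - 1 - a * b * c] := by
  simp only [transferMatrix, Matrix.mul_fin_two, EmbeddingLike.apply_eq_iff_eq, Matrix.vecCons_inj,
    and_true]
  refine ⟨⟨?_, ?_⟩, ?_, ?_⟩ <;> ring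

theorem sub_ne_zero_of_mul_transferMatrix_mul_eq_smul_one {A B : Matrix (Fin 2) (Fin 2) K}
    {t ρ : K} (hρ : ρ ≠ 0) (h : A * transferMatrix t * B = ρ • 1) : 1 - t ≠ 0 := by
  intro ht
  have hdet := congrArg Matrix.det h
  rw [Matrix.det_mul, Matrix.det_mul, det_transferMatrix, ht, mul_zero, zero_mul,
    Matrix.det_smul, Matrix.det_one, mul_one] at hdet
  exact pow_ne_zero _ hρ hdet.symm

theorem transferMatrix_relations {a b c d e f ρ : K} (hρ : ρ ≠ 0)
    (h : transferMatrix f * transferMatrix e * transferMatrix d * transferMatrix c *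
      transferMatrix b * transferMatrix a = ρ • 1) :
    d * (a + c - 1 - a * b * c) = a * (1 - b) ∧ f * (a + c - 1 - a * b * c) = c * (1 - b) := by
  have hsplit : (transferMatrix f * transferMatrix e * transferMatrix d) *
      (transferMatrix c * transferMatrix b * transferMatrix a) = ρ • 1 := by
    simpa only [Matrix.mul_assoc] using h
  have hadj := Matrix.det_smul_eq_smul_adjugate_of_mul_eq_smul_one hsplit
  rw [transferMatrix_mul_mul, transferMatrix_mul_mul, Matrix.adjugate_fin_two_of] at hadj
  have h00 := congrFun₂ hadj 0 0
  have h01 := congrFun₂ hadj 0 1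
  have h10 := congrFun₂ hadj 1 0
  simp only [Matrix.smul_apply, Matrix.of_apply, Matrix.cons_val', Matrix.cons_val_zero,
    Matrix.cons_val_one, Matrix.cons_val_fin_one, smul_eq_mul, mul_neg] at h00 h01 h10
  constructor
  · refine mul_left_cancel₀ hρ ?_
    linear_combination -(d * h00) - h01
  · refine mul_left_cancel₀ hρ ?_
    linear_combination -(f * h00) + h10

end TransferMatrix

theorem hexagon_T_relations (T : Fin 7 → ℂ)
    (M : Fin 7 → Matrix (Fin 2) (Fin 2) ℂ)
    (hM : ∀ i, M i = !![1, -1; 1, -(T i)])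
    (hρ : ∃ ρ : ℂ, ρ ≠ 0 ∧ M 6 * M 5 * M 4 * M 3 * M 2 * M 1 = ρ • 1)
    (h2 : T 2 ≠ 1) (hT4 : T 4 ≠ 0) (hT6 : T 6 ≠ 0) (hT2 : T 2 ≠ 0) :
    T 1 / T 4 = T 3 / T 6 ∧ T 3 / T 6 = T 5 / T 2 ∧
      T 5 / T 2 = (T 1 + T 3 - 1 - T 1 * T 2 * T 3) / (1 - T 2) := by
  obtain ⟨ρ, hρ0, hP⟩ := hρ
  have hM' : ∀ i, M i = transferMatrix (T i) := hM
  simp only [hM'] at hP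
  have hrot := Matrix.mul_eq_smul_one_comm hρ0 hP
  simp only [← Matrix.mul_assoc] at hrot
  have hT3 : 1 - T 3 ≠ 0 := sub_ne_zero_of_mul_transferMatrix_mul_eq_smul_one hρ0 hrot
  have hT2' : 1 - T 2 ≠ 0 := sub_ne_zero.2 h2.symm
  obtain ⟨h14, h36⟩ := transferMatrix_relations hρ0 hP
  obtain ⟨h52, h14'⟩ := transferMatrix_relations hρ0 hrot
  have h1 : T 1 / T 4 = (T 1 + T 3 - 1 - T 1 * T 2 * T 3) / (1 - T 2) := by
    rw [div_eq_div_iff hT4 hT2']; linear_combination -h14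
  have h3 : T 3 / T 6 = (T 1 + T 3 - 1 - T 1 * T 2 * T 3) / (1 - T 2) := by
    rw [div_eq_div_iff hT6 hT2']; linear_combination -h36
  have h5 : T 5 / T 2 = T 1 / T 4 := by
    have hX : T 2 + T 4 - 1 - T 2 * T 3 * T 4 ≠ 0 := by
      rintro hX
      rw [hX, mul_zero, eq_comm] at h52
      exact mul_ne_zero hT2 hT3 h52
    rw [div_eq_div_iff hT2 hT4]
    exact mul_left_cancel₀ hX (by linear_combination T 4 * h52 - T 2 * h14')
  exact ⟨h1.trans h3.symm, h3.trans (h5.trans h1).symm, h5.trans h1⟩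
end

section
/- For six pairwise distinct complex numbers z1,…,z6, if there exists a Möbius transformation M with M(z1)=z4, M(z2)=z5, M(z3)=z6 and M(z4)=z1 (a Möbius involution swapping opposite points), then the multi-ratio m(z1,z2,z3,z4,z5,z6) := ((z1-z2)/(z2-z3))·((z3-z4)/(z4-z5))·((z5-z6)/(z6-z1)) equals -1. -/
/-!
A Möbius map `M` with determinant `Δ` and denominator `D(z) = c z + d` satisfies
`M z - M w = Δ (z - w) / (D(z) D(w))`. Applying this to the consecutive pairs
`(z₁,z₂), (z₂,z₃), (z₃,z₄)` rewrites the multi-ratio as `D(z₁) D(z₄) / Δ`, and applying it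
to the swapped pair `(z₁,z₄)` gives `D(z₁) D(z₄) = -Δ`.
-/

section Moebius

variable {K : Type*} [Field K] {a b c d z w : K}

theorem moebius_sub_moebius (hz : c * z + d ≠ 0) (hw : c * w + d ≠ 0) :
    (a * z + b) / (c * z + d) - (a * w + b) / (c * w + d) =
      (a * d - b * c) * (z - w) / ((c * z + d) * (c * w + d)) := by
  rw [div_sub_div _ _ hz hw]
  ring

theorem denom_mul_denom_of_moebius_swap (hz : c * z + d ≠ 0) (hw : c * w + d ≠ 0)
    (hzw : z ≠ w) (hMz : (a * z + b) / (c * z + d) = w) (hMw : (a * w + b) / (c * w + d) = z) :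
    (c * z + d) * (c * w + d) = -(a * d - b * c) := by
  have h := moebius_sub_moebius (a := a) (b := b) hz hw
  rw [hMz, hMw, eq_div_iff (mul_ne_zero hz hw)] at h
  exact mul_left_cancel₀ (sub_ne_zero.2 hzw) (by linear_combination -h)

end Moebius

theorem multiRatio_of_moebius_involution (z1 z2 z3 z4 z5 z6 : ℂ)
    (hdist : Function.Injective ![z1, z2, z3, z4, z5, z6])
    (hM : ∃ a b c d : ℂ, a * d - b * c ≠ 0 ∧
      c * z1 + d ≠ 0 ∧ c * z2 + d ≠ 0 ∧ c * z3 + d ≠ 0 ∧ c * z4 + d ≠ 0 ∧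
      (a * z1 + b) / (c * z1 + d) = z4 ∧
      (a * z2 + b) / (c * z2 + d) = z5 ∧
      (a * z3 + b) / (c * z3 + d) = z6 ∧
      (a * z4 + b) / (c * z4 + d) = z1) :
    ((z1 - z2) / (z2 - z3)) * ((z3 - z4) / (z4 - z5)) *
      ((z5 - z6) / (z6 - z1)) = -1 := by
  obtain ⟨a, b, c, d, hΔ, n1, n2, n3, n4, m1, m2, m3, m4⟩ := hM
  have h12 : z1 - z2 ≠ 0 :=
    sub_ne_zero.2 (by simpa using hdist.ne (show (0 : Fin 6) ≠ 1 by decide))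
  have h23 : z2 - z3 ≠ 0 :=
    sub_ne_zero.2 (by simpa using hdist.ne (show (1 : Fin 6) ≠ 2 by decide))
  have h34 : z3 - z4 ≠ 0 :=
    sub_ne_zero.2 (by simpa using hdist.ne (show (2 : Fin 6) ≠ 3 by decide))
  have h14 : z1 ≠ z4 := by simpa using hdist.ne (show (0 : Fin 6) ≠ 3 by decide)
  have e12 : z4 - z5 = (a * d - b * c) * (z1 - z2) / ((c * z1 + d) * (c * z2 + d)) := by
    rw [← m1, ← m2, moebius_sub_moebius n1 n2]
  have e23 : z5 - z6 = (a * d - b * c) * (z2 - z3) / ((c * z2 + d) * (c * z3 + d)) := by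
    rw [← m2, ← m3, moebius_sub_moebius n2 n3]
  have e34 : z6 - z1 = (a * d - b * c) * (z3 - z4) / ((c * z3 + d) * (c * z4 + d)) := by
    rw [← m3, ← m4, moebius_sub_moebius n3 n4]
  calc _ = (c * z1 + d) * (c * z4 + d) / (a * d - b * c) := by
        rw [e12, e23, e34]
        field_simp
        rw [div_eq_iff (by simpa only [mul_comm c] using mul_ne_zero n2 n3)]
        ring
    _ = -1 := by rw [denom_mul_denom_of_moebius_swap n1 n4 h14 m1 m4, neg_div_self hΔ]
end

section
/- Let z1,…,z6 be pairwise distinct complex numbers and let M be the (unique) Möbius transformation sending z1,z2,z3 to z4,z5,z6. If the multi-ratio m(z1,…,z6) = -1, then M(z4) = z1, M(z5) = z2 and M(z6) = z3; in particular M is an involution on these six points. -/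
/-!
Write `M z = (a z + b) / (c z + d)` and let `wᵢ = M zᵢ`. Clearing denominators, `M z = w` says
`a z + b = w (c z + d)`, an equation which is symmetric in `z` and `w` exactly when the trace
`a + d` vanishes; so it suffices to show `a + d = 0`. This follows from the polynomial identity
`(a + d) (z₁ - z₃) (z₂ - z₃) (w₁ - w₂) + G (c z₃ + d) = q F₁ - p F₂ + (p - q) F₃`,
where `Fᵢ = a zᵢ + b - wᵢ (c zᵢ + d)`, `p = (z₁ - z₃) (z₃ - w₁)`, `q = (z₂ - z₃) (z₃ - w₂)`, and
`G` is the numerator of `m(z₁, z₂, z₃, w₁, w₂, w₃) + 1`.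
-/

namespace Moebius

variable {K : Type*} [Field K]

def moebius (a b c d z : K) : K := (a * z + b) / (c * z + d)

def multiRatio (z₁ z₂ z₃ z₄ z₅ z₆ : K) : K :=
  ((z₁ - z₂) / (z₂ - z₃)) * ((z₃ - z₄) / (z₄ - z₅)) * ((z₅ - z₆) / (z₆ - z₁))

variable {a b c d : K}

theorem moebius_eq_iff {z w : K} (hz : c * z + d ≠ 0) :
    moebius a b c d z = w ↔ a * z + b = w * (c * z + d) :=
  div_eq_iff hz

theorem multiRatio_eq_neg_one_iff {z₁ z₂ z₃ z₄ z₅ z₆ : K}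
    (h₂₃ : z₂ ≠ z₃) (h₄₅ : z₄ ≠ z₅) (h₆₁ : z₆ ≠ z₁) :
    multiRatio z₁ z₂ z₃ z₄ z₅ z₆ = -1 ↔
      (z₁ - z₂) * (z₃ - z₄) * (z₅ - z₆) + (z₂ - z₃) * (z₄ - z₅) * (z₆ - z₁) = 0 := by
  have hden : (z₂ - z₃) * (z₄ - z₅) * (z₆ - z₁) ≠ 0 :=
    mul_ne_zero (mul_ne_zero (sub_ne_zero.mpr h₂₃) (sub_ne_zero.mpr h₄₅)) (sub_ne_zero.mpr h₆₁)
  rw [multiRatio, div_mul_div_comm, div_mul_div_comm, div_eq_iff hden]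
  constructor <;> intro h <;> linear_combination h

theorem trace_eq_zero_of_multiRatio_eq_neg_one {z₁ z₂ z₃ w₁ w₂ w₃ : K}
    (hz₁ : c * z₁ + d ≠ 0) (hz₂ : c * z₂ + d ≠ 0) (hz₃ : c * z₃ + d ≠ 0)
    (h₁ : moebius a b c d z₁ = w₁) (h₂ : moebius a b c d z₂ = w₂)
    (h₃ : moebius a b c d z₃ = w₃)
    (h₁₃ : z₁ ≠ z₃) (h₂₃ : z₂ ≠ z₃) (hw₁₂ : w₁ ≠ w₂) (hw₃₁ : w₃ ≠ z₁)
    (hm : multiRatio z₁ z₂ z₃ w₁ w₂ w₃ = -1) :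
    a + d = 0 := by
  rw [moebius_eq_iff hz₁] at h₁
  rw [moebius_eq_iff hz₂] at h₂
  rw [moebius_eq_iff hz₃] at h₃
  have hG := (multiRatio_eq_neg_one_iff h₂₃ hw₁₂ hw₃₁).mp hm
  set p := (z₁ - z₃) * (z₃ - w₁)
  set q := (z₂ - z₃) * (z₃ - w₂)
  have key : (a + d) * ((z₁ - z₃) * (z₂ - z₃) * (w₁ - w₂)) = 0 := by
    linear_combination q * h₁ - p * h₂ + (p - q) * h₃ - (c * z₃ + d) * hG
  exact (mul_eq_zero.mp key).resolve_right <|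
    mul_ne_zero (mul_ne_zero (sub_ne_zero.mpr h₁₃) (sub_ne_zero.mpr h₂₃)) (sub_ne_zero.mpr hw₁₂)

theorem moebius_symm_of_trace_eq_zero {z w : K} (htr : a + d = 0)
    (hz : c * z + d ≠ 0) (hw : c * w + d ≠ 0) (h : moebius a b c d z = w) :
    moebius a b c d w = z := by
  rw [moebius_eq_iff hz] at h
  rw [moebius_eq_iff hw]
  linear_combination h + (w - z) * htr

end Moebius

theorem moebius_involution_of_multiRatio_general (z1 z2 z3 z4 z5 z6 a b c d : ℂ)
    (hdist : Function.Injective ![z1, z2, z3, z4, z5, z6])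
    (hp1 : c * z1 + d ≠ 0) (hp2 : c * z2 + d ≠ 0) (hp3 : c * z3 + d ≠ 0)
    (hp4 : c * z4 + d ≠ 0) (hp5 : c * z5 + d ≠ 0) (hp6 : c * z6 + d ≠ 0)
    (h1 : (a * z1 + b) / (c * z1 + d) = z4)
    (h2 : (a * z2 + b) / (c * z2 + d) = z5)
    (h3 : (a * z3 + b) / (c * z3 + d) = z6)
    (hmr : ((z1 - z2) / (z2 - z3)) * ((z3 - z4) / (z4 - z5)) *
      ((z5 - z6) / (z6 - z1)) = -1) :
    (a * z4 + b) / (c * z4 + d) = z1 ∧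
    (a * z5 + b) / (c * z5 + d) = z2 ∧
    (a * z6 + b) / (c * z6 + d) = z3 := by
  have htr : a + d = 0 :=
    Moebius.trace_eq_zero_of_multiRatio_eq_neg_one hp1 hp2 hp3 h1 h2 h3
      (hdist.ne (by decide : (0 : Fin 6) ≠ 2)) (hdist.ne (by decide : (1 : Fin 6) ≠ 2))
      (hdist.ne (by decide : (3 : Fin 6) ≠ 4)) (hdist.ne (by decide : (5 : Fin 6) ≠ 0)) hmr
  exact ⟨Moebius.moebius_symm_of_trace_eq_zero htr hp1 hp4 h1,
    Moebius.moebius_symm_of_trace_eq_zero htr hp2 hp5 h2,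
    Moebius.moebius_symm_of_trace_eq_zero htr hp3 hp6 h3⟩

theorem moebius_involution_of_multiRatio (z1 z2 z3 z4 z5 z6 a b c d : ℂ)
    (hdist : Function.Injective ![z1, z2, z3, z4, z5, z6])
    (hdet : a * d - b * c ≠ 0)
    (hp1 : c * z1 + d ≠ 0) (hp2 : c * z2 + d ≠ 0) (hp3 : c * z3 + d ≠ 0)
    (hp4 : c * z4 + d ≠ 0) (hp5 : c * z5 + d ≠ 0) (hp6 : c * z6 + d ≠ 0)
    (h1 : (a * z1 + b) / (c * z1 + d) = z4)
    (h2 : (a * z2 + b) / (c * z2 + d) = z5)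
    (h3 : (a * z3 + b) / (c * z3 + d) = z6)
    (hmr : ((z1 - z2) / (z2 - z3)) * ((z3 - z4) / (z4 - z5)) *
      ((z5 - z6) / (z6 - z1)) = -1) :
    (a * z4 + b) / (c * z4 + d) = z1 ∧
    (a * z5 + b) / (c * z5 + d) = z2 ∧
    (a * z6 + b) / (c * z6 + d) = z3 :=
  moebius_involution_of_multiRatio_general z1 z2 z3 z4 z5 z6 a b c d hdist hp1 hp2 hp3 hp4 hp5 hp6
    h1 h2 h3 hmr
end

section
/- Suppose z : ℤ² → ℂ satisfies the cross-ratio equation q(z_{m,n}, z_{m+1,n}, z_{m+1,n+1}, z_{m,n+1}) = q for all (m,n) for some fixed q ∈ ℂ (with all relevant differences nonzero). Then for every (m,n), the discrete Toda-type equation holds: 1/(z_{m,n}-z_{m+1,n+1}) + 1/(z_{m,n}-z_{m-1,n-1}) = 1/(z_{m,n}-z_{m+1,n-1}) + 1/(z_{m,n}-z_{m-1,n+1}). -/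
/-! The cross-ratio equation on a quad with vertex `z`, neighbours `a` (horizontal), `b` (vertical)
and opposite vertex `A` implies the three-leg form
`q / (z - a) - 1 / (z - b) = (q - 1) / (z - A)`.
Adding the three-leg forms of the two quads on one diagonal through `z` and subtracting those of the
two quads on the other diagonal, every edge term cancels, leaving `q - 1` times the Toda equation. -/

section CrossRatio

variable {K : Type*} [Field K]

def crossRatio (z₁ z₂ z₃ z₄ : K) : K :=
  (z₂ - z₁) * (z₄ - z₃) / ((z₃ - z₂) * (z₁ - z₄))

theorem crossRatio_comm_pairs (z₁ z₂ z₃ z₄ : K) :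
    crossRatio z₃ z₄ z₁ z₂ = crossRatio z₁ z₂ z₃ z₄ := by
  unfold crossRatio; ring

theorem crossRatio_reverse (z₁ z₂ z₃ z₄ : K) :
    crossRatio z₄ z₃ z₂ z₁ = crossRatio z₁ z₂ z₃ z₄ := by
  unfold crossRatio; ring

theorem crossRatio_swap (z₁ z₂ z₃ z₄ : K) :
    crossRatio z₂ z₁ z₄ z₃ = crossRatio z₁ z₂ z₃ z₄ := by
  rw [← crossRatio_reverse, crossRatio_comm_pairs]

theorem div_sub_one_div_eq_of_crossRatio_eq {z a A b q : K} (h : crossRatio z a A b = q)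
    (hza : z ≠ a) (hzb : z ≠ b) (hzA : z ≠ A) (haA : a ≠ A) :
    q / (z - a) - 1 / (z - b) = (q - 1) / (z - A) := by
  have hden : (A - a) * (z - b) ≠ 0 :=
    mul_ne_zero (sub_ne_zero.2 haA.symm) (sub_ne_zero.2 hzb)
  rw [crossRatio, div_eq_iff hden] at h
  rw [div_sub_div _ _ (sub_ne_zero.2 hza) (sub_ne_zero.2 hzb),
    div_eq_div_iff (mul_ne_zero (sub_ne_zero.2 hza) (sub_ne_zero.2 hzb)) (sub_ne_zero.2 hzA)]
  linear_combination h

theorem toda_of_div_sub_one_div_eq {z a₁ a₂ b₁ b₂ c₁₁ c₂₂ c₁₂ c₂₁ q : K} (hq : q ≠ 1)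
    (h₁₁ : q / (z - a₁) - 1 / (z - b₁) = (q - 1) / (z - c₁₁))
    (h₂₂ : q / (z - a₂) - 1 / (z - b₂) = (q - 1) / (z - c₂₂))
    (h₁₂ : q / (z - a₁) - 1 / (z - b₂) = (q - 1) / (z - c₁₂))
    (h₂₁ : q / (z - a₂) - 1 / (z - b₁) = (q - 1) / (z - c₂₁)) :
    1 / (z - c₁₁) + 1 / (z - c₂₂) = 1 / (z - c₁₂) + 1 / (z - c₂₁) := by
  apply mul_left_cancel₀ (sub_ne_zero.2 hq)
  linear_combination h₁₂ + h₂₁ - h₁₁ - h₂₂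

end CrossRatio

theorem crossRatio_implies_toda_general (z : ℤ → ℤ → ℂ) (q : ℂ)
    (hq1 : q ≠ 1)
    (hcr : ∀ m n : ℤ,
      ((z (m+1) n - z m n) * (z m (n+1) - z (m+1) (n+1))) /
        ((z (m+1) (n+1) - z (m+1) n) * (z m n - z m (n+1))) = q)
    (hne1 : ∀ m n : ℤ, z m n ≠ z (m+1) n)
    (hne2 : ∀ m n : ℤ, z m n ≠ z m (n+1))
    (hne3 : ∀ m n : ℤ, z m n ≠ z (m+1) (n+1))
    (hne4 : ∀ m n : ℤ, z m n ≠ z (m+1) (n-1)) :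
    ∀ m n : ℤ,
      1 / (z m n - z (m+1) (n+1)) + 1 / (z m n - z (m-1) (n-1)) =
        1 / (z m n - z (m+1) (n-1)) + 1 / (z m n - z (m-1) (n+1)) := by
  intro m n
  -- Writing the vertex as `(k + 1, l + 1)`, the four quads around it are indexed without subtraction.
  obtain ⟨k, rfl⟩ : ∃ k, m = k + 1 := ⟨m - 1, by ring⟩
  obtain ⟨l, rfl⟩ : ∃ l, n = l + 1 := ⟨n - 1, by ring⟩
  have hanti : ∀ m n : ℤ, z m (n+1) ≠ z (m+1) n := fun m n => by
    simpa only [add_sub_cancel_right] using hne4 m (n+1)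
  simp only [add_sub_cancel_right]
  exact toda_of_div_sub_one_div_eq hq1
    (div_sub_one_div_eq_of_crossRatio_eq (hcr (k+1) (l+1))
      (hne1 _ _) (hne2 _ _) (hne3 _ _) (hne2 _ _))
    (div_sub_one_div_eq_of_crossRatio_eq ((crossRatio_comm_pairs ..).trans (hcr k l))
      (hne1 _ _).symm (hne2 _ _).symm (hne3 _ _).symm (hne2 _ _).symm)
    (div_sub_one_div_eq_of_crossRatio_eq ((crossRatio_reverse ..).trans (hcr (k+1) l))
      (hne1 _ _) (hne2 _ _).symm (hanti _ _) (hne2 _ _).symm)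
    (div_sub_one_div_eq_of_crossRatio_eq ((crossRatio_swap ..).trans (hcr k (l+1)))
      (hne1 _ _).symm (hne2 _ _) (hanti _ _).symm (hne2 _ _))

theorem crossRatio_implies_toda (z : ℤ → ℤ → ℂ) (q : ℂ)
    (hq0 : q ≠ 0) (hq1 : q ≠ 1)
    (hcr : ∀ m n : ℤ,
      ((z (m+1) n - z m n) * (z m (n+1) - z (m+1) (n+1))) /
        ((z (m+1) (n+1) - z (m+1) n) * (z m n - z m (n+1))) = q)
    (hne1 : ∀ m n : ℤ, z m n ≠ z (m+1) n)
    (hne2 : ∀ m n : ℤ, z m n ≠ z m (n+1))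
    (hne3 : ∀ m n : ℤ, z m n ≠ z (m+1) (n+1))
    (hne4 : ∀ m n : ℤ, z m n ≠ z (m+1) (n-1)) :
    ∀ m n : ℤ,
      1 / (z m n - z (m+1) (n+1)) + 1 / (z m n - z (m-1) (n-1)) =
        1 / (z m n - z (m+1) (n-1)) + 1 / (z m n - z (m-1) (n+1)) :=
  crossRatio_implies_toda_general z q hq1 hcr hne1 hne2 hne3 hne4
end

section
/- Fix q ∈ ℂ, q ≠ 0, 1. Let z, w1, w2, w3, w4, z1, z2, z3, z4 be complex numbers (all distinct from z) satisfying the three equations (q-1)/(z-z1) = q/(z-w4) - 1/(z-w1), (q⁻¹-1)/(z-z2) = q⁻¹/(z-w1) - 1/(z-w2), (q-1)/(z-z3) = q/(z-w2) - 1/(z-w3). Then the fourth equation (q⁻¹-1)/(z-z4) = q⁻¹/(z-w3) - 1/(z-w4) holds if and only if 1/(z-z1) + 1/(z-z3) = 1/(z-z2) + 1/(z-z4). -/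
/-!
Write `aᵢ = 1/(z - zᵢ)` and `bᵢ = 1/(z - wᵢ)`. After multiplying the second and fourth
equations by `q`, all four read `±(q - 1) aᵢ = (difference of consecutive q-weighted bᵢ)`, and
the right-hand sides telescope around the cycle `w₄ → w₁ → w₂ → w₃ → w₄`. Hence, given the first
three equations, the fourth is equivalent to `(q - 1)(a₁ - a₂ + a₃ - a₄) = 0`.
-/

section

variable {K : Type*} [Field K]

theorem inv_sub_one_mul_eq_iff {q : K} (hq : q ≠ 0) (a b c : K) :
    (q⁻¹ - 1) * a = q⁻¹ * b - c ↔ (1 - q) * a = b - q * c := by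
  have hqq : q * q⁻¹ = 1 := mul_inv_cancel₀ hq
  constructor
  · intro h
    linear_combination q * h + (b - a) * hqq
  · intro h
    rw [← mul_right_inj' hq]
    linear_combination h + (a - b) * hqq

theorem fourth_relation_iff_add_eq_add {q a₁ a₂ a₃ a₄ b₁ b₂ b₃ b₄ : K} (hq : q ≠ 1)
    (h₁ : (q - 1) * a₁ = q * b₄ - b₁) (h₂ : (1 - q) * a₂ = b₁ - q * b₂)
    (h₃ : (q - 1) * a₃ = q * b₂ - b₃) :
    (1 - q) * a₄ = b₃ - q * b₄ ↔ a₁ + a₃ = a₂ + a₄ := by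
  have hq' : q - 1 ≠ 0 := sub_ne_zero_of_ne hq
  constructor
  · intro h₄
    have key : (q - 1) * (a₁ + a₃ - (a₂ + a₄)) = 0 := by
      linear_combination h₁ + h₂ + h₃ + h₄
    exact sub_eq_zero.mp ((mul_eq_zero.mp key).resolve_left hq')
  · intro h
    linear_combination (q - 1) * h - h₁ - h₂ - h₃

end

theorem fourth_crossRatio_iff_toda_general (q z w1 w2 w3 w4 z1 z2 z3 z4 : ℂ)
    (hq0 : q ≠ 0) (hq1 : q ≠ 1)
    (e1 : (q - 1) / (z - z1) = q / (z - w4) - 1 / (z - w1))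
    (e2 : (q⁻¹ - 1) / (z - z2) = q⁻¹ / (z - w1) - 1 / (z - w2))
    (e3 : (q - 1) / (z - z3) = q / (z - w2) - 1 / (z - w3)) :
    ((q⁻¹ - 1) / (z - z4) = q⁻¹ / (z - w3) - 1 / (z - w4)) ↔
      1 / (z - z1) + 1 / (z - z3) = 1 / (z - z2) + 1 / (z - z4) := by
  simp only [div_eq_mul_one_div (q - 1), div_eq_mul_one_div (q⁻¹ - 1), div_eq_mul_one_div q,
    div_eq_mul_one_div q⁻¹] at e1 e2 e3 ⊢
  rw [inv_sub_one_mul_eq_iff hq0] at e2 ⊢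
  exact fourth_relation_iff_add_eq_add hq1 e1 e2 e3

theorem fourth_crossRatio_iff_toda (q z w1 w2 w3 w4 z1 z2 z3 z4 : ℂ)
    (hq0 : q ≠ 0) (hq1 : q ≠ 1)
    (hz1 : z ≠ z1) (hz2 : z ≠ z2) (hz3 : z ≠ z3) (hz4 : z ≠ z4)
    (hw1 : z ≠ w1) (hw2 : z ≠ w2) (hw3 : z ≠ w3) (hw4 : z ≠ w4)
    (e1 : (q - 1) / (z - z1) = q / (z - w4) - 1 / (z - w1))
    (e2 : (q⁻¹ - 1) / (z - z2) = q⁻¹ / (z - w1) - 1 / (z - w2))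
    (e3 : (q - 1) / (z - z3) = q / (z - w2) - 1 / (z - w3)) :
    ((q⁻¹ - 1) / (z - z4) = q⁻¹ / (z - w3) - 1 / (z - w4)) ↔
      1 / (z - z1) + 1 / (z - z3) = 1 / (z - z2) + 1 / (z - z4) :=
  fourth_crossRatio_iff_toda_general q z w1 w2 w3 w4 z1 z2 z3 z4 hq0 hq1 e1 e2 e3
end

section
/- Let L(f,g,Δ,λ) := (1-λ²Δ)^{-1/2}·[[1, λf],[λg, 1]] where fg = Δ. For an elementary quadrilateral in ℤ³ with edges in directions n1 and n2 and a field z : ℤ³ → ℂ such that the cross-ratio of the quadrilateral (z_a, z_b, z_c, z_d) equals Δ_{n1}/Δ_{n2}, there exists a field z* (defined on the quadrilateral via (z*_{in} - z*_{out})(z_{in} - z_{out}) = Δ_n along each edge of type n) such that the zero curvature condition L(e4)L(e3)L(e2)L(e1) = I holds around the quadrilateral. Concretely: if a,b,c,d ∈ ℂ are distinct points with q(a,b,c,d) = Δ1/Δ2, and we set edge variables f(e) = z_in - z_out, g(e) = Δ_n/f(e), then the product of the four matrices [[1, λf(e)],[λg(e),1]]/√(1-λ²Δ_{n(e)}) around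 the quadrilateral (with proper orientation) is the identity for all λ with 1-λ²Δ_i ≠ 0. -/
/-!
Multiplying out, both products have upper-right entry `λ (c - a)`, and the equality of each of
the other three entries reduces, after clearing denominators, to
`Δ2 (b - a) (c - d) = Δ1 (c - b) (d - a)`, which is the cross-ratio condition.
-/

section Lax

variable {K : Type*} [Field K]

theorem laxMatrix_mul_laxMatrix (lam x y Δ Δ' : K) :
    !![1, lam * x; lam * Δ / x, 1] * !![1, lam * y; lam * Δ' / y, 1] =
      !![1 + lam ^ 2 * (x * Δ' / y), lam * (x + y);
        lam * (Δ / x + Δ' / y), 1 + lam ^ 2 * (Δ * y / x)] := by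
  rw [Matrix.mul_fin_two]
  ext i j
  fin_cases i <;> fin_cases j <;> (dsimp; ring)

theorem crossRatio_eq_div_iff {Δ1 Δ2 a b c d : K} (hbc : b ≠ c) (had : a ≠ d) (hΔ2 : Δ2 ≠ 0) :
    (b - a) * (d - c) / ((c - b) * (a - d)) = Δ1 / Δ2 ↔
      (b - a) * (c - d) * Δ2 = (c - b) * (d - a) * Δ1 := by
  have hcb : c - b ≠ 0 := sub_ne_zero.mpr hbc.symm
  have had' : a - d ≠ 0 := sub_ne_zero.mpr had
  rw [div_eq_div_iff (mul_ne_zero hcb had') hΔ2]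
  constructor <;> intro h <;> linear_combination -h

theorem laxMatrix_zero_curvature {Δ1 Δ2 a b c d : K}
    (hab : a ≠ b) (hbc : b ≠ c) (hcd : c ≠ d) (had : a ≠ d)
    (h : (b - a) * (c - d) * Δ2 = (c - b) * (d - a) * Δ1) (lam : K) :
    !![1, lam * (c - d); lam * Δ1 / (c - d), 1] * !![1, lam * (d - a); lam * Δ2 / (d - a), 1] =
      !![1, lam * (c - b); lam * Δ2 / (c - b), 1] *
        !![1, lam * (b - a); lam * Δ1 / (b - a), 1] := by
  have hba : b - a ≠ 0 := sub_ne_zero.mpr hab.symm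
  have hcb : c - b ≠ 0 := sub_ne_zero.mpr hbc.symm
  have hcd' : c - d ≠ 0 := sub_ne_zero.mpr hcd
  have hda : d - a ≠ 0 := sub_ne_zero.mpr had.symm
  have h00 : (c - d) * Δ2 / (d - a) = (c - b) * Δ1 / (b - a) := by
    rw [div_eq_div_iff hda hba]; linear_combination h
  have h01 : (c - d) + (d - a) = (c - b) + (b - a) := by ring
  have h10 : Δ1 / (c - d) + Δ2 / (d - a) = Δ2 / (c - b) + Δ1 / (b - a) := by
    rw [div_add_div _ _ hcd' hda, div_add_div _ _ hcb hba,
      div_eq_div_iff (mul_ne_zero hcd' hda) (mul_ne_zero hcb hba)]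
    linear_combination (c - b + a - d) * h
  have h11 : Δ1 * (d - a) / (c - d) = Δ2 * (b - a) / (c - b) := by
    rw [div_eq_div_iff hcd' hcb]; linear_combination -h
  rw [laxMatrix_mul_laxMatrix, laxMatrix_mul_laxMatrix, h00, h01, h10, h11]

end Lax

theorem zero_curvature_of_crossRatio_general (Δ1 Δ2 : ℂ) (hΔ2 : Δ2 ≠ 0)
    (a b c d : ℂ)
    (hab : a ≠ b) (had : a ≠ d)
    (hbc : b ≠ c) (hcd : c ≠ d)
    (hcr : ((b - a) * (d - c)) / ((c - b) * (a - d)) = Δ1 / Δ2) :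
    ∀ lam : ℂ,
      (!![1, lam * (c - d); lam * Δ1 / (c - d), 1] *
        !![1, lam * (d - a); lam * Δ2 / (d - a), 1] :
        Matrix (Fin 2) (Fin 2) ℂ) =
      !![1, lam * (c - b); lam * Δ2 / (c - b), 1] *
        !![1, lam * (b - a); lam * Δ1 / (b - a), 1] :=
  laxMatrix_zero_curvature hab hbc hcd had ((crossRatio_eq_div_iff hbc had hΔ2).mp hcr)

theorem zero_curvature_of_crossRatio (Δ1 Δ2 : ℂ) (hΔ1 : Δ1 ≠ 0) (hΔ2 : Δ2 ≠ 0)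
    (a b c d : ℂ)
    (hab : a ≠ b) (hac : a ≠ c) (had : a ≠ d)
    (hbc : b ≠ c) (hbd : b ≠ d) (hcd : c ≠ d)
    (hcr : ((b - a) * (d - c)) / ((c - b) * (a - d)) = Δ1 / Δ2) :
    ∀ lam : ℂ,
      (!![1, lam * (c - d); lam * Δ1 / (c - d), 1] *
        !![1, lam * (d - a); lam * Δ2 / (d - a), 1] :
        Matrix (Fin 2) (Fin 2) ℂ) =
      !![1, lam * (c - b); lam * Δ2 / (c - b), 1] *
        !![1, lam * (b - a); lam * Δ1 / (b - a), 1] :=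
  zero_curvature_of_crossRatio_general Δ1 Δ2 hΔ2 a b c d hab had hbc hcd hcr
end

section
/- Let a,b,c,d ∈ ℂ be pairwise distinct. The matrix identity [[1, λ(c-d)],[λΔ1/(c-d), 1]]·[[1, λ(d-a)],[λΔ2/(d-a), 1]] = [[1, λ(c-b)],[λΔ2/(c-b), 1]]·[[1, λ(b-a)],[λΔ1/(b-a), 1]] holds for all λ ∈ ℂ if and only if the cross-ratio q(a,b,c,d) = ((b-a)(d-c))/((c-b)(a-d)) equals Δ1/Δ2. -/
/-!
Writing `L(λ; u, δ) = [[1, λu], [λδ/u, 1]]`, a product `L(λ; u, δ) L(λ; v, ε)` is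
`[[1 + λ²uε/v, λ(u + v)], [λ(δ/u + ε/v), 1 + λ²δv/u]]`. For `u = c - d`, `v = d - a`,
`x = c - b`, `y = b - a` one has `u + v = x + y`, so the upper right entries agree, and each of the
other three entries of `L(u, Δ1) L(v, Δ2) = L(x, Δ2) L(y, Δ1)` is equivalent to
`u Δ2 y = x Δ1 v`, which is the cross-ratio condition cleared of denominators.
-/

open Matrix

variable {K : Type*} [Field K]

def laxMatrix (lam u δ : K) : Matrix (Fin 2) (Fin 2) K :=
  !![1, lam * u; lam * δ / u, 1]

theorem laxMatrix_mul_laxMatrix_s13 (lam u v δ ε : K) :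
    laxMatrix lam u δ * laxMatrix lam v ε =
      !![1 + lam ^ 2 * (u * ε / v), lam * (u + v);
        lam * (δ / u + ε / v), 1 + lam ^ 2 * (δ * v / u)] := by
  rw [laxMatrix, laxMatrix, mul_fin_two]
  simp only [EmbeddingLike.apply_eq_iff_eq, vecCons_inj, and_true]
  refine ⟨⟨?_, ?_⟩, ?_, ?_⟩ <;> ring

theorem laxMatrix_mul_eq_mul_swap_iff {u v x y δ ε : K} (hu : u ≠ 0) (hv : v ≠ 0)
    (hx : x ≠ 0) (hy : y ≠ 0) (hsum : u + v = x + y) :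
    (∀ lam : K, laxMatrix lam u δ * laxMatrix lam v ε = laxMatrix lam x ε * laxMatrix lam y δ) ↔
      u * ε * y = x * δ * v := by
  simp only [laxMatrix_mul_laxMatrix_s13]
  constructor
  · intro h
    have h00 := congrFun (congrFun (h 1) 0) 0
    simp only [of_apply, cons_val', cons_val_zero, empty_val', cons_val_fin_one, one_pow,
      one_mul, add_right_inj] at h00
    rwa [div_eq_div_iff hv hy] at h00
  · intro h lam
    have h00 : u * ε / v = x * δ / y := (div_eq_div_iff hv hy).2 h
    have h11 : δ * v / u = ε * y / x := by
      rw [div_eq_div_iff hu hx]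
      linear_combination -h
    have h10 : δ / u + ε / v = ε / x + δ / y := by
      field_simp
      linear_combination (x - v) * h - δ * v * x * hsum
    rw [h00, h11, h10, hsum]

theorem zero_curvature_iff_crossRatio_general (Δ1 Δ2 : ℂ) (hΔ2 : Δ2 ≠ 0)
    (a b c d : ℂ)
    (hab : a ≠ b) (had : a ≠ d)
    (hbc : b ≠ c) (hcd : c ≠ d) :
    (∀ lam : ℂ,
      (!![1, lam * (c - d); lam * Δ1 / (c - d), 1] *
        !![1, lam * (d - a); lam * Δ2 / (d - a), 1] :
        Matrix (Fin 2) (Fin 2) ℂ) =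
      !![1, lam * (c - b); lam * Δ2 / (c - b), 1] *
        !![1, lam * (b - a); lam * Δ1 / (b - a), 1]) ↔
      ((b - a) * (d - c)) / ((c - b) * (a - d)) = Δ1 / Δ2 := by
  have hba : b - a ≠ 0 := sub_ne_zero.2 hab.symm
  have hcb : c - b ≠ 0 := sub_ne_zero.2 hbc.symm
  have hda : d - a ≠ 0 := sub_ne_zero.2 had.symm
  refine (laxMatrix_mul_eq_mul_swap_iff (sub_ne_zero.2 hcd) hda hcb hba (by ring)).trans ?_
  rw [div_eq_div_iff (mul_ne_zero hcb (sub_ne_zero.2 had)) hΔ2]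
  constructor <;> intro h <;> linear_combination -h

theorem zero_curvature_iff_crossRatio (Δ1 Δ2 : ℂ) (hΔ1 : Δ1 ≠ 0) (hΔ2 : Δ2 ≠ 0)
    (a b c d : ℂ)
    (hab : a ≠ b) (hac : a ≠ c) (had : a ≠ d)
    (hbc : b ≠ c) (hbd : b ≠ d) (hcd : c ≠ d) :
    (∀ lam : ℂ,
      (!![1, lam * (c - d); lam * Δ1 / (c - d), 1] *
        !![1, lam * (d - a); lam * Δ2 / (d - a), 1] :
        Matrix (Fin 2) (Fin 2) ℂ) =
      !![1, lam * (c - b); lam * Δ2 / (c - b), 1] *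
        !![1, lam * (b - a); lam * Δ1 / (b - a), 1]) ↔
      ((b - a) * (d - c)) / ((c - b) * (a - d)) = Δ1 / Δ2 :=
  zero_curvature_iff_crossRatio_general Δ1 Δ2 hΔ2 a b c d hab had hbc hcd
end

section
/- Let R, R_1,…,R_6 > 0 satisfy the Doyle relations R_k·R_{k+3} = R² (k=1,2,3) and R_1·R_3·R_5 = R³ (equivalently R_k·R_{k+2}·R_{k+4} = R³). Then for any angles α1, α2, α3 ∈ (0,π) with α1+α2+α3 = π, the product ∏_{n=1}^{3} (1 + e^{iα_n}·R_n/R)·(e^{-iα_n} + R_{n+3}/R) is a positive real number (i.e., has argument 0). -/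
open Complex ComplexConjugate

/-!
Each of the three factors is already a positive real. Put `r = R_n / R`; the Doyle relation
`R_n R_{n+3} = R²` says `R_{n+3} / R = r⁻¹`, and since `e^{-iα}` is the conjugate of `e^{iα}`,
`(1 + e^{iα} r) (e^{-iα} + r⁻¹) = |1 + e^{iα} r|² / r`, which is positive because
`Im (1 + e^{iα} r) = r sin α ≠ 0` for `α ∈ (0, π)`.
-/

theorem one_add_exp_mul_mul_exp_neg_add_inv (α : ℝ) {r : ℝ} (hr : r ≠ 0) :
    (1 + exp (I * α) * r) * (exp (-I * α) + (r : ℂ)⁻¹) = normSq (1 + exp (I * α) * r) / r := by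
  have hconj : exp (-I * α) + (r : ℂ)⁻¹ = conj (1 + exp (I * α) * r) / r := by
    rw [map_add, map_one, map_mul, ← exp_conj, map_mul, conj_ofReal, conj_ofReal, conj_I, add_div,
      mul_div_cancel_right₀ _ (ofReal_ne_zero.2 hr), one_div, neg_mul, add_comm]
  rw [hconj, mul_div_assoc', mul_conj]

theorem im_one_add_exp_mul (α r : ℝ) : (1 + exp (I * α) * r).im = Real.sin α * r := by
  simp [mul_comm I, exp_ofReal_mul_I_im]

theorem one_add_exp_mul_ne_zero {α : ℝ} (hα : α ∈ Set.Ioo 0 Real.pi) {r : ℝ} (hr : r ≠ 0) :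
    1 + exp (I * α) * r ≠ 0 := by
  intro h
  have him := im_one_add_exp_mul α r
  rw [h, zero_im] at him
  exact mul_ne_zero (Real.sin_pos_of_pos_of_lt_pi hα.1 hα.2).ne' hr him.symm

theorem exists_pos_eq_one_add_exp_mul_mul_exp_neg_add {R a b α : ℝ} (hR : 0 < R) (ha : 0 < a)
    (hab : a * b = R ^ 2) (hα : α ∈ Set.Ioo 0 Real.pi) :
    ∃ t : ℝ, 0 < t ∧ (1 + exp (I * α) * (a / R)) * (exp (-I * α) + b / R) = t := by
  have hr : 0 < a / R := div_pos ha hR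
  have hb : (b / R : ℂ) = ((a / R : ℝ) : ℂ)⁻¹ := by
    have : b / R = (a / R)⁻¹ := by
      field_simp
      linear_combination hab
    exact_mod_cast this
  refine ⟨normSq (1 + exp (I * α) * (a / R : ℝ)) / (a / R), ?_, ?_⟩
  · exact div_pos (normSq_pos.2 (one_add_exp_mul_ne_zero hα hr.ne')) hr
  · rw [hb, ← ofReal_div a R, one_add_exp_mul_mul_exp_neg_add_inv α hr.ne', ← ofReal_div]

theorem doyle_radii_solve_pattern_equation_general (R R1 R2 R3 R4 R5 R6 : ℝ)
    (hR : 0 < R) (h1 : 0 < R1) (h2 : 0 < R2) (h3 : 0 < R3)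
    (hd1 : R1 * R4 = R ^ 2) (hd2 : R2 * R5 = R ^ 2) (hd3 : R3 * R6 = R ^ 2)
    (α1 α2 α3 : ℝ)
    (ha1 : α1 ∈ Set.Ioo (0 : ℝ) Real.pi) (ha2 : α2 ∈ Set.Ioo (0 : ℝ) Real.pi)
    (ha3 : α3 ∈ Set.Ioo (0 : ℝ) Real.pi) :
    ∃ t : ℝ, 0 < t ∧
      (1 + Complex.exp (Complex.I * α1) * (R1 / R)) *
        (Complex.exp (-Complex.I * α1) + (R4 / R)) *
      ((1 + Complex.exp (Complex.I * α2) * (R2 / R)) *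
        (Complex.exp (-Complex.I * α2) + (R5 / R))) *
      ((1 + Complex.exp (Complex.I * α3) * (R3 / R)) *
        (Complex.exp (-Complex.I * α3) + (R6 / R))) = (t : ℂ) := by
  obtain ⟨t1, ht1, e1⟩ := exists_pos_eq_one_add_exp_mul_mul_exp_neg_add hR h1 hd1 ha1
  obtain ⟨t2, ht2, e2⟩ := exists_pos_eq_one_add_exp_mul_mul_exp_neg_add hR h2 hd2 ha2
  obtain ⟨t3, ht3, e3⟩ := exists_pos_eq_one_add_exp_mul_mul_exp_neg_add hR h3 hd3 ha3
  exact ⟨t1 * t2 * t3, by positivity, by rw [e1, e2, e3, ofReal_mul, ofReal_mul]⟩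

theorem doyle_radii_solve_pattern_equation (R R1 R2 R3 R4 R5 R6 : ℝ)
    (hR : 0 < R) (h1 : 0 < R1) (h2 : 0 < R2) (h3 : 0 < R3)
    (h4 : 0 < R4) (h5 : 0 < R5) (h6 : 0 < R6)
    (hd1 : R1 * R4 = R ^ 2) (hd2 : R2 * R5 = R ^ 2) (hd3 : R3 * R6 = R ^ 2)
    (hd4 : R1 * R3 * R5 = R ^ 3)
    (α1 α2 α3 : ℝ)
    (ha1 : α1 ∈ Set.Ioo (0 : ℝ) Real.pi) (ha2 : α2 ∈ Set.Ioo (0 : ℝ) Real.pi)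
    (ha3 : α3 ∈ Set.Ioo (0 : ℝ) Real.pi) (hsum : α1 + α2 + α3 = Real.pi) :
    ∃ t : ℝ, 0 < t ∧
      (1 + Complex.exp (Complex.I * α1) * (R1 / R)) *
        (Complex.exp (-Complex.I * α1) + (R4 / R)) *
      ((1 + Complex.exp (Complex.I * α2) * (R2 / R)) *
        (Complex.exp (-Complex.I * α2) + (R5 / R))) *
      ((1 + Complex.exp (Complex.I * α3) * (R3 / R)) *
        (Complex.exp (-Complex.I * α3) + (R6 / R))) = (t : ℂ) :=
  doyle_radii_solve_pattern_equation_general R R1 R2 R3 R4 R5 R6 hR h1 h2 h3 hd1 hd2 hd3 α1 α2 α3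
    ha1 ha2 ha3
end

section
/- Duality involution on radius equation: if positive reals r, r_1,…,r_6 satisfy arg ∏_{n=1}^{3}(1+e^{iα_n}·(r_n/r))·(e^{-iα_n}+(r_{n+3}/r)) = 0 (the product is a positive real), then the reciprocal radii r* = 1/r, r*_n = 1/r_n also satisfy the same equation: ∏_{n=1}^{3}(1+e^{iα_n}·(r*_n/r*))·(e^{-iα_n}+(r*_{n+3}/r*)) is a positive real. -/
/-! Since the product is real it equals its complex conjugate, in which each `e^{±iα_n}` is
replaced by `e^{∓iα_n}`. Passing to reciprocal radii turns each factor pair into the conjugate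
pair times the positive real `(r/r_n)(r/r_{n+3})`, so the dual product is a positive multiple of
the conjugate of the original one. -/

open Complex ComplexConjugate

noncomputable def pairFactor (α : ℝ) (a b : ℂ) : ℂ :=
  (1 + exp (I * α) * a) * (exp (-I * α) + b)

lemma conj_pairFactor_ofReal (α a b : ℝ) :
    conj (pairFactor α a b) = (1 + exp (-I * α) * a) * (exp (I * α) + b) := by
  simp only [pairFactor, map_mul, map_add, map_one, conj_ofReal, ← exp_conj, conj_I, map_neg,
    neg_mul, neg_neg]

lemma pairFactor_inv_ofReal (α : ℝ) {a b : ℝ} (ha : a ≠ 0) (hb : b ≠ 0) :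
    pairFactor α (a : ℂ)⁻¹ (b : ℂ)⁻¹ = ((a * b)⁻¹ : ℝ) * conj (pairFactor α a b) := by
  have he : exp (I * α) ≠ 0 := exp_ne_zero _
  have ha' : (a : ℂ) ≠ 0 := ofReal_ne_zero.mpr ha
  have hb' : (b : ℂ) ≠ 0 := ofReal_ne_zero.mpr hb
  rw [conj_pairFactor_ofReal, pairFactor, neg_mul, exp_neg]
  push_cast
  field_simp
  ring

theorem dual_radii_solve_pattern_equation_general (r r1 r2 r3 r4 r5 r6 : ℝ)
    (hr : 0 < r) (h1 : 0 < r1) (h2 : 0 < r2) (h3 : 0 < r3)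
    (h4 : 0 < r4) (h5 : 0 < r5) (h6 : 0 < r6)
    (α1 α2 α3 : ℝ)
    (hpat : ∃ t : ℝ, 0 < t ∧
      (1 + Complex.exp (Complex.I * α1) * (r1 / r)) *
        (Complex.exp (-Complex.I * α1) + (r4 / r)) *
      ((1 + Complex.exp (Complex.I * α2) * (r2 / r)) *
        (Complex.exp (-Complex.I * α2) + (r5 / r))) *
      ((1 + Complex.exp (Complex.I * α3) * (r3 / r)) *
        (Complex.exp (-Complex.I * α3) + (r6 / r))) = (t : ℂ)) :
    ∃ t : ℝ, 0 < t ∧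
      (1 + Complex.exp (Complex.I * α1) * ((1/r1) / (1/r))) *
        (Complex.exp (-Complex.I * α1) + ((1/r4) / (1/r))) *
      ((1 + Complex.exp (Complex.I * α2) * ((1/r2) / (1/r))) *
        (Complex.exp (-Complex.I * α2) + ((1/r5) / (1/r)))) *
      ((1 + Complex.exp (Complex.I * α3) * ((1/r3) / (1/r))) *
        (Complex.exp (-Complex.I * α3) + ((1/r6) / (1/r)))) = (t : ℂ) := by
  obtain ⟨t, ht, hprod⟩ := hpat
  change pairFactor α1 (r1 / r) (r4 / r) * pairFactor α2 (r2 / r) (r5 / r) *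
    pairFactor α3 (r3 / r) (r6 / r) = t at hprod
  refine ⟨((r1 / r * (r4 / r))⁻¹ * (r2 / r * (r5 / r))⁻¹ * (r3 / r * (r6 / r))⁻¹) * t,
    by positivity, ?_⟩
  change pairFactor α1 (1 / r1 / (1 / r)) (1 / r4 / (1 / r)) *
    pairFactor α2 (1 / r2 / (1 / r)) (1 / r5 / (1 / r)) *
    pairFactor α3 (1 / r3 / (1 / r)) (1 / r6 / (1 / r)) = _
  have hrecip (a : ℝ) : 1 / (a : ℂ) / (1 / r) = ((a / r : ℝ) : ℂ)⁻¹ := by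
    rw [div_div_div_cancel_left' _ _ one_ne_zero, ofReal_div, inv_div]
  simp only [hrecip]
  simp only [← ofReal_div] at hprod
  have hconj := congrArg conj hprod
  rw [map_mul, map_mul, conj_ofReal] at hconj
  rw [pairFactor_inv_ofReal _ (by positivity) (by positivity),
    pairFactor_inv_ofReal _ (by positivity) (by positivity),
    pairFactor_inv_ofReal _ (by positivity) (by positivity)]
  simp only [ofReal_mul, ← hconj]
  ring

theorem dual_radii_solve_pattern_equation (r r1 r2 r3 r4 r5 r6 : ℝ)
    (hr : 0 < r) (h1 : 0 < r1) (h2 : 0 < r2) (h3 : 0 < r3)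
    (h4 : 0 < r4) (h5 : 0 < r5) (h6 : 0 < r6)
    (α1 α2 α3 : ℝ)
    (ha1 : α1 ∈ Set.Ioo (0 : ℝ) Real.pi) (ha2 : α2 ∈ Set.Ioo (0 : ℝ) Real.pi)
    (ha3 : α3 ∈ Set.Ioo (0 : ℝ) Real.pi) (hsum : α1 + α2 + α3 = Real.pi)
    (hpat : ∃ t : ℝ, 0 < t ∧
      (1 + Complex.exp (Complex.I * α1) * (r1 / r)) *
        (Complex.exp (-Complex.I * α1) + (r4 / r)) *
      ((1 + Complex.exp (Complex.I * α2) * (r2 / r)) *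
        (Complex.exp (-Complex.I * α2) + (r5 / r))) *
      ((1 + Complex.exp (Complex.I * α3) * (r3 / r)) *
        (Complex.exp (-Complex.I * α3) + (r6 / r))) = (t : ℂ)) :
    ∃ t : ℝ, 0 < t ∧
      (1 + Complex.exp (Complex.I * α1) * ((1/r1) / (1/r))) *
        (Complex.exp (-Complex.I * α1) + ((1/r4) / (1/r))) *
      ((1 + Complex.exp (Complex.I * α2) * ((1/r2) / (1/r))) *
        (Complex.exp (-Complex.I * α2) + ((1/r5) / (1/r)))) *
      ((1 + Complex.exp (Complex.I * α3) * ((1/r3) / (1/r))) *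
        (Complex.exp (-Complex.I * α3) + ((1/r6) / (1/r)))) = (t : ℂ) :=
  dual_radii_solve_pattern_equation_general r r1 r2 r3 r4 r5 r6 hr h1 h2 h3 h4 h5 h6 α1 α2 α3 hpat
end

section
/- Suppose z : ℤ → ℂ is injective and satisfies the one-dimensional constraint c·z_k = 2k·(z_{k+1}-z_k)(z_k-z_{k-1})/(z_{k+1}-z_{k-1}) for all k ≥ 1, with initial data z_0 = 0 and z_1 = 1 and c ∈ (0,2). Then all z_k are real, z is strictly increasing on nonnegative indices, and |z_{2n+1} - z_{2n}| = |z_{2n} - z_{2n-1}| for all n ≥ 1. (Restriction of the z^c constraint to a coordinate axis: the axis points lie on a straight line and satisfy the equidistance property.) -/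
/-!
Write `d k = z k - z (k - 1)` and `A k = axisWeight c k`, i.e. `A k = k` for even `k` and
`A k = k - 1 + c` for odd `k`.
The relation `c z_k = A_k d_k` holds for `k = 1`, and together with the recursion it gives
`(2k - A_k) d_{k+1} = A_k d_k`; since `A_{k+1} = 2k + c - A_k` the relation propagates to `k + 1`.
As `0 < A_k < 2k`, all increments are positive reals, and for even `k` the identity `A_k = k`
turns the step into `d_{k+1} = d_k`.
-/

noncomputable def axisWeight (c : ℝ) (k : ℕ) : ℝ :=
  if Even k then k else k - 1 + c

namespace axisWeight

variable {c : ℝ}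

@[simp]
theorem one : axisWeight c 1 = c := by
  simp [axisWeight]

theorem two_mul (n : ℕ) : axisWeight c (2 * n) = 2 * n := by
  simp [axisWeight]

theorem succ (k : ℕ) : axisWeight c (k + 1) = 2 * k + c - axisWeight c k := by
  rcases Nat.even_or_odd k with hk | hk
  · simp [axisWeight, hk, Nat.even_add_one]
    ring
  · simp [axisWeight, hk, Nat.not_even_iff_odd.2 hk]
    ring

theorem pos (hc : 0 < c) {k : ℕ} (hk : 1 ≤ k) : 0 < axisWeight c k := by
  have : (1 : ℝ) ≤ k := by exact_mod_cast hk
  unfold axisWeight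
  split_ifs <;> linarith

theorem lt_two_mul (hc2 : c < 2) {k : ℕ} (hk : 1 ≤ k) : axisWeight c k < 2 * k := by
  have : (1 : ℝ) ≤ k := by exact_mod_cast hk
  unfold axisWeight
  split_ifs <;> linarith

end axisWeight

theorem sub_mul_eq_of_recursion {R : Type*} [CommRing R] [NoZeroDivisors R] {c a m u v w : R}
    (hrec : c * v * (w - u) = m * (w - v) * (v - u)) (hinv : c * v = a * (v - u))
    (huv : v ≠ u) : (w - v) * (m - a) = a * (v - u) := by
  have h : (v - u) * (a * (w - u) - m * (w - v)) = 0 := by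
    linear_combination hrec - (w - u) * hinv
  rcases mul_eq_zero.1 h with h | h
  · exact absurd (sub_eq_zero.1 h) huv
  · linear_combination -h

section Recursion

variable {c : ℝ} {z : ℕ → ℂ}
  (hrec : ∀ k : ℕ, 1 ≤ k →
    (c : ℂ) * z k * (z (k + 1) - z (k - 1)) = 2 * (k : ℂ) * (z (k + 1) - z k) * (z k - z (k - 1)))
include hrec

theorem succ_sub_mul_of_weight {k : ℕ} {x y : ℝ} (hx : z k = x) (hy : z (k + 1) = y)
    (hxy : x < y) (hinv : c * y = axisWeight c (k + 1) * (y - x)) :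
    (z (k + 2) - y) * (2 * (k + 1) - (axisWeight c (k + 1) : ℂ)) =
      axisWeight c (k + 1) * (y - x) := by
  have h := hrec (k + 1) (by omega)
  simp only [Nat.add_sub_cancel, hx, hy] at h
  push_cast at h
  exact sub_mul_eq_of_recursion h (by exact_mod_cast hinv) (by exact_mod_cast hxy.ne')

theorem exists_real_lt_of_recursion (hc : 0 < c) (hc2 : c < 2) (h0 : z 0 = 0) (h1 : z 1 = 1)
    (k : ℕ) : ∃ x y : ℝ, z k = x ∧ z (k + 1) = y ∧ x < y ∧
      c * y = axisWeight c (k + 1) * (y - x) := by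
  induction k with
  | zero => exact ⟨0, 1, by simp [h0], by simp [h1], one_pos, by simp⟩
  | succ k ih =>
    obtain ⟨x, y, hx, hy, hxy, hinv⟩ := ih
    set a := axisWeight c (k + 1)
    have ha : 0 < a := axisWeight.pos hc (by omega)
    have hden : 0 < 2 * (k + 1) - a := by
      have := axisWeight.lt_two_mul hc2 (k := k + 1) (by omega)
      push_cast at this
      linarith
    set q := a * (y - x) / (2 * (k + 1) - a)
    have hq : 0 < q := div_pos (mul_pos ha (by linarith)) hden
    have hqden : q * (2 * (k + 1) - a) = a * (y - x) := div_mul_cancel₀ _ hden.ne'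
    have hz : z (k + 2) = (y + q : ℝ) := by
      have h := succ_sub_mul_of_weight hrec hx hy hxy hinv
      have hden' : (2 * (k + 1) - a : ℂ) ≠ 0 := by exact_mod_cast hden.ne'
      push_cast [q]
      field_simp
      linear_combination h
    refine ⟨y, y + q, hy, hz, by linarith, ?_⟩
    rw [axisWeight.succ]
    push_cast
    linear_combination hinv - hqden

theorem succ_sub_eq_sub_of_weight_eq {k : ℕ} {x y : ℝ} (hx : z k = x) (hy : z (k + 1) = y)
    (hxy : x < y) (hinv : c * y = axisWeight c (k + 1) * (y - x))
    (hA : axisWeight c (k + 1) = k + 1) : z (k + 2) - z (k + 1) = z (k + 1) - z k := by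
  have h := succ_sub_mul_of_weight hrec hx hy hxy hinv
  rw [hA] at h
  push_cast at h
  have h' : ((k : ℂ) + 1) * ((z (k + 2) - y) - (y - x)) = 0 := by linear_combination h
  rw [hx, hy, ← sub_eq_zero]
  exact (mul_eq_zero.1 h').resolve_left (by exact_mod_cast k.succ_ne_zero)

end Recursion

theorem axis_points_real_increasing_equidistant_general (c : ℝ) (hc : 0 < c) (hc2 : c < 2)
    (z : ℕ → ℂ)
    (h0 : z 0 = 0) (h1 : z 1 = 1)
    (hrec : ∀ k : ℕ, 1 ≤ k →
      (c : ℂ) * z k * (z (k + 1) - z (k - 1)) =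
        2 * (k : ℂ) * (z (k + 1) - z k) * (z k - z (k - 1))) :
    (∀ k : ℕ, (z k).im = 0) ∧
    (∀ k : ℕ, 1 ≤ k → 0 < (z k).re) ∧
    (∀ k : ℕ, (z k).re < (z (k + 1)).re) ∧
    (∀ n : ℕ, 1 ≤ n → z (2 * n + 1) - z (2 * n) = z (2 * n) - z (2 * n - 1)) := by
  have hreal := exists_real_lt_of_recursion hrec hc hc2 h0 h1
  refine ⟨fun k => ?_, fun k hk => ?_, fun k => ?_, fun n hn => ?_⟩
  · obtain ⟨x, -, hx, -⟩ := hreal k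
    simp [hx]
  · obtain ⟨m, rfl⟩ := Nat.exists_eq_add_of_le' hk
    obtain ⟨x, y, -, hy, hxy, hinv⟩ := hreal m
    have hcy : 0 < c * y := hinv ▸ mul_pos (axisWeight.pos hc (by omega)) (sub_pos.2 hxy)
    simpa [hy] using pos_of_mul_pos_right hcy hc.le
  · obtain ⟨x, y, hx, hy, hxy, -⟩ := hreal k
    simpa [hx, hy] using hxy
  · obtain ⟨m, hm⟩ : ∃ m, 2 * n = m + 1 := ⟨2 * n - 1, by omega⟩
    obtain ⟨x, y, hx, hy, hxy, hinv⟩ := hreal m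
    have hA : axisWeight c (m + 1) = m + 1 := by
      rw [← hm, axisWeight.two_mul]
      exact_mod_cast hm
    rw [show 2 * n + 1 = m + 2 by omega, hm, show m + 1 - 1 = m by omega]
    exact succ_sub_eq_sub_of_weight_eq hrec hx hy hxy hinv hA

theorem axis_points_real_increasing_equidistant (c : ℝ) (hc : 0 < c) (hc2 : c < 2)
    (z : ℕ → ℂ) (hinj : Function.Injective z)
    (h0 : z 0 = 0) (h1 : z 1 = 1)
    (hne : ∀ k : ℕ, 1 ≤ k → z (k + 1) ≠ z (k - 1))
    (hrec : ∀ k : ℕ, 1 ≤ k →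
      (c : ℂ) * z k * (z (k + 1) - z (k - 1)) =
        2 * (k : ℂ) * (z (k + 1) - z k) * (z k - z (k - 1))) :
    (∀ k : ℕ, (z k).im = 0) ∧
    (∀ k : ℕ, 1 ≤ k → 0 < (z k).re) ∧
    (∀ k : ℕ, (z k).re < (z (k + 1)).re) ∧
    (∀ n : ℕ, 1 ≤ n → z (2 * n + 1) - z (2 * n) = z (2 * n) - z (2 * n - 1)) :=
  axis_points_real_increasing_equidistant_general c hc hc2 z h0 h1 hrec
end
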